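/- C_{Δ,max} is quasiconvex: for any finite family of states ρ_i and probability weights p_i (p_i ≥ 0, Σ_i p_i = 1), one has C_{Δ,max}(Σ_i p_i ρ_i) ≤ max_i C_{Δ,max}(ρ_i). -/

import Mathlib

open scoped Matrix ComplexOrder

namespace OneShot

variable {ι κ : Type*} [Fintype ι] [DecidableEq ι] [Fintype κ] [DecidableEq κ]

/-- A quantum state: a positive semidefinite matrix with unit trace. -/
def IsState (ρ : Matrix ι ι ℂ) : Prop := ρ.PosSemidef ∧ ρ.trace = 1

/-- An incoherent state: a state that is diagonal in the computational basis. -/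
def IsIncoherent (ρ : Matrix ι ι ℂ) : Prop := IsState ρ ∧ ρ.IsDiag

/-- The completely dephasing channel `Δ`. -/
def dephase (ρ : Matrix ι ι ℂ) : Matrix ι ι ℂ := Matrix.diagonal fun i => ρ i i

/-- The max-relative entropy of coherence
`C_max(ρ) = min_{δ ∈ 𝓘} D_max(ρ‖δ) = log₂ min {λ ≥ 0 | ∃ δ ∈ 𝓘, ρ ≤ λ δ}`. -/
noncomputable def Cmax (ρ : Matrix ι ι ℂ) : ℝ :=
  Real.logb 2 (sInf {l : ℝ | 0 ≤ l ∧ ∃ δ, IsIncoherent δ ∧ (l • δ - ρ).PosSemidef})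

/-- `C_{Δ,max}(ρ) = log₂ min {λ ≥ 0 | ρ ≤ λ Δ(ρ)}`. -/
noncomputable def CDmax (ρ : Matrix ι ι ℂ) : ℝ :=
  Real.logb 2 (sInf {l : ℝ | 0 ≤ l ∧ (l • dephase ρ - ρ).PosSemidef})

/-- Complete positivity of a linear map on matrices. -/
def CompletelyPositive (Λ : Matrix ι ι ℂ →ₗ[ℂ] Matrix κ κ ℂ) : Prop :=
  ∀ (k : ℕ) (M : Matrix (Fin k × ι) (Fin k × ι) ℂ), M.PosSemidef →
    (Matrix.of fun p q : Fin k × κ =>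
      Λ (Matrix.of fun x y => M (p.1, x) (q.1, y)) p.2 q.2).PosSemidef

/-- Trace preservation. -/
def TracePreserving (Λ : Matrix ι ι ℂ →ₗ[ℂ] Matrix κ κ ℂ) : Prop :=
  ∀ A, (Λ A).trace = A.trace

/-- A maximally incoherent operation (MIO): a CPTP map sending every incoherent state
to an incoherent state. -/
def IsMIO (Λ : Matrix ι ι ℂ →ₗ[ℂ] Matrix κ κ ℂ) : Prop :=
  CompletelyPositive Λ ∧ TracePreserving Λ ∧ ∀ δ, IsIncoherent δ → IsIncoherent (Λ δ)

/-- A dephasing-covariant incoherent operation (DIO): a CPTP map commuting with `Δ`. -/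
def IsDIO (Λ : Matrix ι ι ℂ →ₗ[ℂ] Matrix ι ι ℂ) : Prop :=
  CompletelyPositive Λ ∧ TracePreserving Λ ∧ ∀ ρ, Λ (dephase ρ) = dephase (Λ ρ)

/-- An incoherent-preserving (Kraus) operator: `K δ Kᴴ` is a nonnegative multiple of an
incoherent state, for every incoherent state `δ`. -/
def IncoherentPreserving (K : Matrix κ ι ℂ) : Prop :=
  ∀ δ : Matrix ι ι ℂ, IsIncoherent δ →
    ∃ c : ℝ, 0 ≤ c ∧ ∃ δ' : Matrix κ κ ℂ, IsIncoherent δ' ∧ K * δ * Kᴴ = (c : ℂ) • δ'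

/-- An incoherent operation (IO). -/
def IsIO (Λ : Matrix ι ι ℂ →ₗ[ℂ] Matrix κ κ ℂ) : Prop :=
  ∃ (N : ℕ) (K : Fin N → Matrix κ ι ℂ),
    (∀ n, IncoherentPreserving (K n)) ∧ (∑ n, (K n)ᴴ * K n = 1) ∧
    ∀ ρ, Λ ρ = ∑ n, K n * ρ * (K n)ᴴ

/-- A strictly incoherent operation (SIO). -/
def IsSIO (Λ : Matrix ι ι ℂ →ₗ[ℂ] Matrix κ κ ℂ) : Prop :=
  ∃ (N : ℕ) (K : Fin N → Matrix κ ι ℂ),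
    (∀ n, IncoherentPreserving (K n)) ∧ (∀ n, IncoherentPreserving (K n)ᴴ) ∧
    (∑ n, (K n)ᴴ * K n = 1) ∧ ∀ ρ, Λ ρ = ∑ n, K n * ρ * (K n)ᴴ

/-- The outer product `|ψ⟩⟨ψ|`. -/
def outer (ψ : ι → ℂ) : Matrix ι ι ℂ := Matrix.of fun i j => ψ i * star (ψ j)

/-- `T ψ` is the number of nonzero computational-basis coefficients of `ψ`. -/
noncomputable def T (ψ : ι → ℂ) : ℕ := (Finset.univ.filter fun i => ψ i ≠ 0).card

/-- A finite pure-state decomposition `ρ = Σ_j p_j |ψ_j⟩⟨ψ_j|`. -/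
def IsDecomposition (ρ : Matrix ι ι ℂ) (n : ℕ) (p : Fin n → ℝ) (ψ : Fin n → ι → ℂ) : Prop :=
  (∀ j, 0 < p j) ∧ (∑ j, p j = 1) ∧ (∀ j, ∑ i, Complex.normSq (ψ j i) = 1) ∧
    ρ = ∑ j, p j • outer (ψ j)

/-- `C_0(ρ) = min over decompositions of max_j log₂ T(ψ_j)`. -/
noncomputable def C0 (ρ : Matrix ι ι ℂ) : ℝ :=
  sInf { r | ∃ n p ψ, IsDecomposition ρ n p ψ ∧
    r = Real.logb 2 (↑(Finset.univ.sup fun j => T (ψ j)) : ℝ) }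

/-- Matrix square root of a positive semidefinite matrix (junk value `0` elsewhere). -/
noncomputable def msqrt (A : Matrix ι ι ℂ) : Matrix ι ι ℂ :=
  letI := Classical.propDecidable A.PosSemidef
  if h : A.PosSemidef then
    (h.1.eigenvectorUnitary : Matrix ι ι ℂ) *
      Matrix.diagonal ((↑) ∘ (fun x : ℝ => Real.sqrt x) ∘ h.1.eigenvalues) *
      (star h.1.eigenvectorUnitary : Matrix ι ι ℂ)
  else 0

/-- Uhlmann fidelity `F(ρ,σ) = (Tr √(√ρ σ √ρ))²`. -/
noncomputable def Fid (ρ σ : Matrix ι ι ℂ) : ℝ :=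
  ((msqrt (msqrt ρ * σ * msqrt ρ)).trace.re) ^ 2

/-- Smoothed `C_max`. -/
noncomputable def Cmaxeps (ρ : Matrix ι ι ℂ) (ε : ℝ) : ℝ :=
  sInf { r | ∃ ρ', IsState ρ' ∧ 1 - ε ≤ Fid ρ ρ' ∧ r = Cmax ρ' }

/-- Smoothed `C_{Δ,max}`. -/
noncomputable def CDmaxeps (ρ : Matrix ι ι ℂ) (ε : ℝ) : ℝ :=
  sInf { r | ∃ ρ', IsState ρ' ∧ 1 - ε ≤ Fid ρ ρ' ∧ r = CDmax ρ' }

/-- Smoothed `C_0`. -/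
noncomputable def C0eps (ρ : Matrix ι ι ℂ) (ε : ℝ) : ℝ :=
  sInf { r | ∃ ρ', IsState ρ' ∧ 1 - ε ≤ Fid ρ ρ' ∧ r = C0 ρ' }

/-- The maximally coherent state `Ψ_M = |Ψ_M⟩⟨Ψ_M|` of dimension `M`. -/
noncomputable def PsiM (M : ℕ) : Matrix (Fin M) (Fin M) ℂ := Matrix.of fun _ _ => (1 : ℂ) / M

/-- One-shot coherence cost under MIO. -/
noncomputable def CMIOeps (ρ : Matrix ι ι ℂ) (ε : ℝ) : ℝ :=
  sInf { r | ∃ M : ℕ, 1 ≤ M ∧ r = Real.logb 2 M ∧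
    ∃ Λ : Matrix (Fin M) (Fin M) ℂ →ₗ[ℂ] Matrix ι ι ℂ, IsMIO Λ ∧ 1 - ε ≤ Fid ρ (Λ (PsiM M)) }

/-- One-shot coherence cost under DIO. -/
noncomputable def CDIOeps (ρ : Matrix ι ι ℂ) (ε : ℝ) : ℝ :=
  sInf { r | ∃ M : ℕ, 1 ≤ M ∧ r = Real.logb 2 M ∧
    ∃ Λ : Matrix (Fin M) (Fin M) ℂ →ₗ[ℂ] Matrix ι ι ℂ,
      CompletelyPositive Λ ∧ TracePreserving Λ ∧ (∀ ω, Λ (dephase ω) = dephase (Λ ω)) ∧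
      1 - ε ≤ Fid ρ (Λ (PsiM M)) }

/-- One-shot coherence cost under IO. -/
noncomputable def CIOeps (ρ : Matrix ι ι ℂ) (ε : ℝ) : ℝ :=
  sInf { r | ∃ M : ℕ, 1 ≤ M ∧ r = Real.logb 2 M ∧
    ∃ Λ : Matrix (Fin M) (Fin M) ℂ →ₗ[ℂ] Matrix ι ι ℂ, IsIO Λ ∧ 1 - ε ≤ Fid ρ (Λ (PsiM M)) }

/-- One-shot coherence cost under SIO. -/
noncomputable def CSIOeps (ρ : Matrix ι ι ℂ) (ε : ℝ) : ℝ :=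
  sInf { r | ∃ M : ℕ, 1 ≤ M ∧ r = Real.logb 2 M ∧
    ∃ Λ : Matrix (Fin M) (Fin M) ℂ →ₗ[ℂ] Matrix ι ι ℂ, IsSIO Λ ∧ 1 - ε ≤ Fid ρ (Λ (PsiM M)) }

/-- Matrix logarithm (base 2) via the spectral decomposition, with `log₂ 0 = 0` junk
convention on the kernel, and junk value `0` on non-Hermitian matrices. -/
noncomputable def mlog2 (A : Matrix ι ι ℂ) : Matrix ι ι ℂ :=
  letI := Classical.propDecidable A.IsHermitian
  if h : A.IsHermitian then
    (h.eigenvectorUnitary : Matrix ι ι ℂ) *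
      Matrix.diagonal (fun i => (Real.logb 2 (h.eigenvalues i) : ℂ)) *
      (h.eigenvectorUnitary : Matrix ι ι ℂ)ᴴ
  else 0

/-- The relative entropy of coherence `C_r(ρ) = min_{δ ∈ 𝓘} S(ρ‖δ)`, where the minimum
is (equivalently) restricted to those `δ` whose support contains the support of `ρ`,
on which `S(ρ‖δ) = Tr[ρ (log₂ ρ − log₂ δ)]` is finite. -/
noncomputable def Cr (ρ : Matrix ι ι ℂ) : ℝ :=
  sInf { r | ∃ δ, IsIncoherent δ ∧ (∀ v : ι → ℂ, δ.mulVec v = 0 → ρ.mulVec v = 0) ∧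
    r = ((ρ * (mlog2 ρ - mlog2 δ)).trace).re }

/-- Von Neumann entropy (base 2). -/
noncomputable def vN (σ : Matrix ι ι ℂ) : ℝ := -((σ * mlog2 σ).trace.re)

/-- The coherence of formation. -/
noncomputable def Cf (ρ : Matrix ι ι ℂ) : ℝ :=
  sInf { r | ∃ n p ψ, IsDecomposition ρ n p ψ ∧
    r = ∑ j, p j * vN (dephase (outer (ψ j))) }

/-- The set `A_ρ = { (1/t)[(1+t)Δ(ρ) − ρ] : t > 0, (1+t)Δ(ρ) − ρ ≥ 0 }`. -/
def Aset (ρ : Matrix ι ι ℂ) : Set (Matrix ι ι ℂ) :=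
  { σ | ∃ t : ℝ, 0 < t ∧ ((1 + t) • dephase ρ - ρ).PosSemidef ∧
      σ = t⁻¹ • ((1 + t) • dephase ρ - ρ) }

/-- The `n`-fold tensor power `ρ^{⊗ n}`. -/
def tpow (ρ : Matrix ι ι ℂ) (n : ℕ) : Matrix (Fin n → ι) (Fin n → ι) ℂ :=
  Matrix.of fun i j => ∏ t, ρ (i t) (j t)

/-! For fixed `l`, the condition `ρ ≤ l • Δ ρ` is convex in `ρ` because `Δ` is linear, and the
admissible `l` form an up-set because `Δ ρ ≥ 0`. So every `l` above all the optimal values for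
the `ρ i` is admissible for each `ρ i`, hence for the mixture. The optimal values are infima of
nonempty sets (not junk): `l = d` is always admissible, since `d • Δ A - A` is the Schur product
of `A` with `d • 1 - J` (`J` the all-ones matrix), which is positive semidefinite by
Cauchy–Schwarz. -/

open Matrix

theorem star_dotProduct_card_smul_one_sub_allOnes_mulVec (x : ι → ℂ) :
    star x ⬝ᵥ (((Fintype.card ι : ℂ) • (1 : Matrix ι ι ℂ) - of fun _ _ => 1) *ᵥ x) =
      ((Fintype.card ι * ∑ i, ‖x i‖ ^ 2 - ‖∑ i, x i‖ ^ 2 : ℝ) : ℂ) := by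
  have hJ : (of fun _ _ => 1 : Matrix ι ι ℂ) *ᵥ x = fun _ => ∑ i, x i := by
    ext; simp [mulVec, dotProduct]
  rw [sub_mulVec, smul_mulVec, one_mulVec, hJ, dotProduct_sub, dotProduct_smul]
  simp only [dotProduct, Pi.star_apply, RCLike.star_def, Complex.conj_mul', ← Finset.sum_mul,
    ← map_sum]
  push_cast
  simp

theorem posSemidef_card_smul_one_sub_allOnes :
    ((Fintype.card ι : ℂ) • (1 : Matrix ι ι ℂ) - of fun _ _ => 1).PosSemidef := by
  refine .of_dotProduct_mulVec_nonneg ?_ fun x => ?_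
  · ext i j
    by_cases h : i = j <;> simp [h, eq_comm, one_apply]
  · have hcs : ‖∑ i, x i‖ ^ 2 ≤ Fintype.card ι * ∑ i, ‖x i‖ ^ 2 :=
      calc ‖∑ i, x i‖ ^ 2 ≤ (∑ i, ‖x i‖) ^ 2 := by gcongr; exact norm_sum_le _ _
        _ ≤ _ := sq_sum_le_card_mul_sum_sq
    rw [star_dotProduct_card_smul_one_sub_allOnes_mulVec, Complex.zero_le_real]
    linarith

theorem card_smul_dephase_sub_eq_hadamard (A : Matrix ι ι ℂ) :
    (Fintype.card ι : ℝ) • dephase A - A =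
      A ⊙ ((Fintype.card ι : ℂ) • (1 : Matrix ι ι ℂ) - of fun _ _ => 1) := by
  ext i j
  rcases eq_or_ne i j with rfl | hij
  · simp [dephase]
    ring
  · simp [dephase, hij]

theorem posSemidef_card_smul_dephase_sub {A : Matrix ι ι ℂ} (hA : A.PosSemidef) :
    ((Fintype.card ι : ℝ) • dephase A - A).PosSemidef := by
  rw [card_smul_dephase_sub_eq_hadamard]
  exact hA.hadamard posSemidef_card_smul_one_sub_allOnes

omit [Fintype ι] in
theorem posSemidef_dephase {A : Matrix ι ι ℂ} (hA : A.PosSemidef) : (dephase A).PosSemidef :=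
  posSemidef_diagonal_iff.2 fun _ => hA.diag_nonneg

theorem trace_dephase (A : Matrix ι ι ℂ) : (dephase A).trace = A.trace := by
  simp [dephase, trace]

omit [Fintype ι] in
theorem dephase_sum_smul {α : Type*} (s : Finset α) (p : α → ℝ) (ρ : α → Matrix ι ι ℂ) :
    dephase (∑ i ∈ s, p i • ρ i) = ∑ i ∈ s, p i • dephase (ρ i) := by
  ext j k
  rcases eq_or_ne j k with rfl | hjk <;> simp [dephase, Matrix.sum_apply, *]

omit [DecidableEq ι] in
theorem isState_sum_smul {α : Type*} {s : Finset α} {p : α → ℝ} {ρ : α → Matrix ι ι ℂ}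
    (hp : ∀ i ∈ s, 0 ≤ p i) (hp1 : ∑ i ∈ s, p i = 1) (hρ : ∀ i ∈ s, IsState (ρ i)) :
    IsState (∑ i ∈ s, p i • ρ i) := by
  refine ⟨posSemidef_sum s fun i hi => (hρ i hi).1.smul (hp i hi), ?_⟩
  rw [trace_sum, ← Complex.ofReal_one, ← hp1, Complex.ofReal_sum]
  refine Finset.sum_congr rfl fun i hi => ?_
  rw [trace_smul, (hρ i hi).2, Complex.real_smul, mul_one]

def dephaseBounds (ρ : Matrix ι ι ℂ) : Set ℝ :=
  {l : ℝ | 0 ≤ l ∧ (l • dephase ρ - ρ).PosSemidef}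

omit [Fintype ι] in
theorem CDmax_eq_logb_sInf_dephaseBounds (ρ : Matrix ι ι ℂ) :
    CDmax ρ = Real.logb 2 (sInf (dephaseBounds ρ)) :=
  rfl

section dephaseBounds

variable {ρ : Matrix ι ι ℂ} {l l' : ℝ}

theorem card_mem_dephaseBounds (hρ : ρ.PosSemidef) : (Fintype.card ι : ℝ) ∈ dephaseBounds ρ :=
  ⟨Nat.cast_nonneg _, posSemidef_card_smul_dephase_sub hρ⟩

omit [Fintype ι] in
theorem mem_dephaseBounds_of_le (hρ : ρ.PosSemidef) (hl : l ∈ dephaseBounds ρ) (hll' : l ≤ l') :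
    l' ∈ dephaseBounds ρ := by
  refine ⟨hl.1.trans hll', ?_⟩
  have hsplit : l' • dephase ρ - ρ = (l • dephase ρ - ρ) + (l' - l) • dephase ρ := by
    rw [sub_smul]; abel
  rw [hsplit]
  exact hl.2.add ((posSemidef_dephase hρ).smul (sub_nonneg.2 hll'))

theorem mem_dephaseBounds_of_sInf_lt (hρ : ρ.PosSemidef) (hl : sInf (dephaseBounds ρ) < l) :
    l ∈ dephaseBounds ρ := by
  obtain ⟨l₀, hl₀, hl₀l⟩ := exists_lt_of_csInf_lt ⟨_, card_mem_dephaseBounds hρ⟩ hl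
  exact mem_dephaseBounds_of_le hρ hl₀ hl₀l.le

theorem one_le_of_mem_dephaseBounds (hρ : ρ.trace = 1) (hl : l ∈ dephaseBounds ρ) : 1 ≤ l := by
  have htrace := hl.2.trace_nonneg
  rw [trace_sub, trace_smul, trace_dephase, hρ, Complex.real_smul, mul_one,
    ← Complex.ofReal_one, ← Complex.ofReal_sub, Complex.zero_le_real] at htrace
  linarith

theorem one_le_sInf_dephaseBounds (hρ : IsState ρ) : 1 ≤ sInf (dephaseBounds ρ) :=
  le_csInf ⟨_, card_mem_dephaseBounds hρ.1⟩ fun _ => one_le_of_mem_dephaseBounds hρ.2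

end dephaseBounds

omit [Fintype ι] in
theorem mem_dephaseBounds_sum_smul {α : Type*} (s : Finset α) {p : α → ℝ}
    {ρ : α → Matrix ι ι ℂ} {l : ℝ} (hp : ∀ i ∈ s, 0 ≤ p i) (hl₀ : 0 ≤ l)
    (hl : ∀ i ∈ s, l ∈ dephaseBounds (ρ i)) : l ∈ dephaseBounds (∑ i ∈ s, p i • ρ i) := by
  refine ⟨hl₀, ?_⟩
  have hsplit : l • dephase (∑ i ∈ s, p i • ρ i) - ∑ i ∈ s, p i • ρ i =
      ∑ i ∈ s, p i • (l • dephase (ρ i) - ρ i) := by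
    simp only [dephase_sum_smul, Finset.smul_sum, ← Finset.sum_sub_distrib, smul_sub,
      smul_comm l]
  rw [hsplit]
  exact posSemidef_sum s fun i hi => (hl i hi).2.smul (hp i hi)

theorem sInf_dephaseBounds_sum_smul_le {α : Type*} (s : Finset α) (hs : s.Nonempty)
    {p : α → ℝ} {ρ : α → Matrix ι ι ℂ} (hp : ∀ i ∈ s, 0 ≤ p i)
    (hρ : ∀ i ∈ s, (ρ i).PosSemidef) :
    sInf (dephaseBounds (∑ i ∈ s, p i • ρ i)) ≤
      s.sup' hs fun i => sInf (dephaseBounds (ρ i)) := by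
  refine le_of_forall_gt_imp_ge_of_dense fun l hl => csInf_le ⟨0, fun _ h => h.1⟩ ?_
  have hmem : ∀ i ∈ s, l ∈ dephaseBounds (ρ i) := fun i hi =>
    mem_dephaseBounds_of_sInf_lt (hρ i hi) ((Finset.le_sup' _ hi).trans_lt hl)
  obtain ⟨i, hi⟩ := hs
  exact mem_dephaseBounds_sum_smul s hp (hmem i hi).1 hmem

/-- `C_{Δ,max}` is quasiconvex. -/
theorem CDmax_quasiconvex {d : ℕ} (n : ℕ) (hn : 0 < n) (p : Fin n → ℝ)
    (ρ : Fin n → Matrix (Fin d) (Fin d) ℂ)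
    (hp : ∀ i, 0 ≤ p i) (hp1 : ∑ i, p i = 1) (hρ : ∀ i, IsState (ρ i)) :
    CDmax (∑ i, p i • ρ i) ≤
      Finset.univ.sup' ⟨⟨0, hn⟩, Finset.mem_univ _⟩ (fun i => CDmax (ρ i)) := by
  have hmix : 1 ≤ sInf (dephaseBounds (∑ i, p i • ρ i)) :=
    one_le_sInf_dephaseBounds (isState_sum_smul (fun i _ => hp i) hp1 fun i _ => hρ i)
  obtain ⟨i, -, hi⟩ := (Finset.le_sup'_iff _).1 <|
    sInf_dephaseBounds_sum_smul_le Finset.univ ⟨⟨0, hn⟩, Finset.mem_univ _⟩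
      (fun i _ => hp i) fun i _ => (hρ i).1
  calc CDmax (∑ i, p i • ρ i) ≤ CDmax (ρ i) := by
        simp only [CDmax_eq_logb_sInf_dephaseBounds]
        exact Real.logb_le_logb_of_le one_lt_two (zero_lt_one.trans_le hmix) hi
    _ ≤ _ := Finset.le_sup' (fun i => CDmax (ρ i)) (Finset.mem_univ i)

end OneShot
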